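/- Let A, B be real n×n positive semidefinite matrices with A = LLᵀ and B = MMᵀ. Then dist_BW(A, B) = min over orthogonal Q ∈ O(n) of ‖L − MQ‖_F. -/

import Mathlib

/-!
Expanding the square, `‖L - MQ‖_F² = tr A + tr B - 2 tr (Qᵀ MᵀL)` for orthogonal `Q`. Writing
`C = U Σ Vᵀ` (singular value decomposition), `tr (Qᵀ C) = tr ((VᵀQᵀU) Σ)` is at most the nuclear
norm `‖C‖₊ = tr Σ`, because the diagonal entries of the orthogonal matrix `VᵀQᵀU` are at most `1`,
with equality at `Q = UVᵀ`. It remains to see `tr (A^{1/2} B A^{1/2})^{1/2} = ‖MᵀL‖₊`. The nuclear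
norm of `X` only depends on `XᵀX` and, since `‖Xᵀ‖₊ = ‖X‖₊`, only on `XXᵀ`; this identifies the
nuclear norms of `B^{1/2} A^{1/2}`, `B^{1/2} L` and `MᵀL`.
-/

open Matrix BigOperators Classical

/-- Squared Frobenius norm. -/
def frobSq {m n : Type*} [Fintype m] [Fintype n] (C : Matrix m n ℝ) : ℝ :=
  ∑ i, ∑ j, (C i j) ^ 2

/-- Frobenius norm. -/
noncomputable def frobNorm {m n : Type*} [Fintype m] [Fintype n]
    (C : Matrix m n ℝ) : ℝ :=
  Real.sqrt (frobSq C)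

/-- Square root of a positive semidefinite matrix (junk value `0` otherwise). -/
noncomputable def psdSqrt {n : Type*} [Fintype n] [DecidableEq n]
    (A : Matrix n n ℝ) : Matrix n n ℝ :=
  if h : A.PosSemidef then
    h.1.eigenvectorUnitary.1 * diagonal ((RCLike.ofReal : ℝ → ℝ) ∘ (Real.sqrt ∘ h.1.eigenvalues)) *
      (star h.1.eigenvectorUnitary : Matrix n n ℝ)
  else 0

/-- Nuclear norm: `‖C‖₊ = tr((CᵀC)^{1/2})`, the sum of the singular values. -/
noncomputable def nuclearNorm {m n : Type*} [Fintype m] [Fintype n] [DecidableEq n]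
    (C : Matrix m n ℝ) : ℝ :=
  (psdSqrt (Cᵀ * C)).trace

/-- Squared Bures–Wasserstein distance:
`dist_BW²(A,B) = tr A + tr B − 2 tr((A^{1/2} B A^{1/2})^{1/2})`. -/
noncomputable def distBWsq {n : Type*} [Fintype n] [DecidableEq n]
    (A B : Matrix n n ℝ) : ℝ :=
  A.trace + B.trace - 2 * (psdSqrt (psdSqrt A * B * psdSqrt A)).trace

section psdSqrt

open scoped MatrixOrder

variable {n : Type*} [Fintype n] [DecidableEq n]

lemma psdSqrt_eq_cfcSqrt {A : Matrix n n ℝ} (hA : A.PosSemidef) : psdSqrt A = CFC.sqrt A := by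
  rw [psdSqrt, dif_pos hA, CFC.sqrt_eq_cfc, cfc_nnreal_eq_real _ A hA.nonneg, hA.1.cfc_eq]
  simp only [IsHermitian.cfc, Unitary.conjStarAlgAut_apply]
  congr 3
  funext i
  simp [Real.coe_sqrt, Real.coe_toNNReal', hA.eigenvalues_nonneg i]

lemma psdSqrt_mul_self {A : Matrix n n ℝ} (hA : A.PosSemidef) : psdSqrt A * psdSqrt A = A := by
  rw [psdSqrt_eq_cfcSqrt hA]
  exact CFC.sqrt_mul_sqrt_self A hA.nonneg

lemma posSemidef_psdSqrt (A : Matrix n n ℝ) : (psdSqrt A).PosSemidef := by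
  by_cases hA : A.PosSemidef
  · rw [psdSqrt_eq_cfcSqrt hA]
    exact (CFC.sqrt_nonneg A).posSemidef
  · simp only [psdSqrt, dif_neg hA]
    exact .zero

lemma transpose_psdSqrt (A : Matrix n n ℝ) : (psdSqrt A)ᵀ = psdSqrt A :=
  (isHermitian_iff_isSymm.mp (posSemidef_psdSqrt A).isHermitian).eq

lemma psdSqrt_eq_of_mul_self_eq {A S : Matrix n n ℝ} (hS : S.PosSemidef) (h : S * S = A) :
    psdSqrt A = S := by
  have hA : A.PosSemidef := by simpa [← h, sq] using hS.pow 2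
  rw [psdSqrt_eq_cfcSqrt hA]
  exact CFC.sqrt_unique h hS.nonneg

end psdSqrt

section svd

variable {n : Type*} [Fintype n] [DecidableEq n]

lemma exists_orthogonal_mul_diagonal_eq (W : Matrix n n ℝ) (σ : n → ℝ)
    (hW : Wᵀ * W = diagonal (σ ^ 2)) :
    ∃ U : Matrix n n ℝ, Uᵀ * U = 1 ∧ U * diagonal σ = W := by
  -- Normalise the columns `w j` with `σ j ≠ 0` and complete them to an orthonormal basis;
  -- the other columns of `W` vanish, so any completion works.
  let w : n → EuclideanSpace ℝ n := fun j => WithLp.toLp 2 (Wᵀ j)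
  have hw : ∀ i j, inner ℝ (w i) (w j) = if i = j then σ i ^ 2 else 0 := by
    intro i j
    have := congrFun (congrFun hW i) j
    simp only [mul_apply, transpose_apply, diagonal_apply, Pi.pow_apply] at this
    simp [w, PiLp.inner_apply, ← this, mul_comm]
  have hw_zero : ∀ j, σ j = 0 → w j = 0 := by
    intro j hj
    rw [← inner_self_eq_zero (𝕜 := ℝ), hw, if_pos rfl, hj, zero_pow two_ne_zero]
  let v : n → EuclideanSpace ℝ n := fun j => (σ j)⁻¹ • w j
  have hv : Orthonormal ℝ ({j | σ j ≠ 0}.domRestrict v) := by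
    rw [orthonormal_iff_ite]
    rintro ⟨i, hi⟩ ⟨j, hj⟩
    simp only [Set.domRestrict_apply, v, real_inner_smul_left, real_inner_smul_right, hw,
      Subtype.mk.injEq]
    split_ifs with hij
    · subst hij
      have hi : σ i ≠ 0 := hi
      field_simp
    · simp
  obtain ⟨b, hb⟩ := hv.exists_orthonormalBasis_extension_of_card_eq (by simp)
  refine ⟨(EuclideanSpace.basisFun n ℝ).toBasis.toMatrix b.toBasis, ?_, ?_⟩
  · simpa using (EuclideanSpace.basisFun n ℝ).toMatrix_orthonormalBasis_conjTranspose_mul_self b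
  · ext k j
    by_cases hj : σ j = 0
    · simpa [hj, w, eq_comm] using congrArg (· k) (hw_zero j hj)
    · simp [Module.Basis.toMatrix_apply, hb j hj, v, w]
      field_simp

lemma exists_orthogonal_diagonal_of_posSemidef {A : Matrix n n ℝ} (hA : A.PosSemidef) :
    ∃ V : Matrix n n ℝ, ∃ μ : n → ℝ, Vᵀ * V = 1 ∧ 0 ≤ μ ∧ A = V * diagonal μ * Vᵀ := by
  refine ⟨hA.1.eigenvectorUnitary, hA.1.eigenvalues, ?_, hA.eigenvalues_nonneg, ?_⟩
  · simpa [star_eq_conjTranspose] using mem_unitaryGroup_iff'.mp hA.1.eigenvectorUnitary.2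
  · simpa [Unitary.conjStarAlgAut_apply, star_eq_conjTranspose] using hA.1.spectral_theorem

lemma exists_svd (C : Matrix n n ℝ) :
    ∃ U V : Matrix n n ℝ, ∃ σ : n → ℝ,
      Uᵀ * U = 1 ∧ Vᵀ * V = 1 ∧ 0 ≤ σ ∧ C = U * diagonal σ * Vᵀ := by
  obtain ⟨V, μ, hV, hμ, hCC⟩ := exists_orthogonal_diagonal_of_posSemidef
    (by simpa using posSemidef_conjTranspose_mul_self C : (Cᵀ * C).PosSemidef)
  obtain ⟨U, hU, hUσ⟩ := exists_orthogonal_mul_diagonal_eq (C * V) (fun i => √(μ i)) <| by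
    calc (C * V)ᵀ * (C * V) = Vᵀ * (Cᵀ * C) * V := by simp [mul_assoc]
      _ = diagonal μ := by rw [hCC]; simp [← mul_assoc, hV, mul_assoc _ Vᵀ V]
      _ = diagonal ((fun i => √(μ i)) ^ 2) := by
        congr 1; funext i; simp [Real.sq_sqrt (hμ i)]
  refine ⟨U, V, fun i => √(μ i), hU, hV, fun i => Real.sqrt_nonneg _, ?_⟩
  rw [hUσ, mul_assoc, mul_eq_one_comm.mp hV, mul_one]

end svd

section nuclearNorm

variable {n : Type*} [Fintype n] [DecidableEq n]

lemma nuclearNorm_mul_diagonal_mul_transpose {U V : Matrix n n ℝ} {σ : n → ℝ}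
    (hU : Uᵀ * U = 1) (hV : Vᵀ * V = 1) (hσ : 0 ≤ σ) :
    nuclearNorm (U * diagonal σ * Vᵀ) = ∑ i, σ i := by
  have hsqrt :
      psdSqrt ((U * diagonal σ * Vᵀ)ᵀ * (U * diagonal σ * Vᵀ)) = V * diagonal σ * Vᵀ := by
    refine psdSqrt_eq_of_mul_self_eq ?_ ?_
    · simpa using (posSemidef_diagonal_iff.mpr hσ).mul_mul_conjTranspose_same V
    · simp only [transpose_mul, transpose_transpose, diagonal_transpose, mul_assoc]
      simp only [← mul_assoc Vᵀ, ← mul_assoc Uᵀ, hU, hV, one_mul]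
  rw [nuclearNorm, hsqrt, trace_mul_cycle, hV, one_mul, trace_diagonal]

lemma nuclearNorm_transpose (C : Matrix n n ℝ) : nuclearNorm Cᵀ = nuclearNorm C := by
  obtain ⟨U, V, σ, hU, hV, hσ, rfl⟩ := exists_svd C
  have hCt : (U * diagonal σ * Vᵀ)ᵀ = V * diagonal σ * Uᵀ := by
    simp [mul_assoc]
  rw [hCt, nuclearNorm_mul_diagonal_mul_transpose hV hU hσ,
    nuclearNorm_mul_diagonal_mul_transpose hU hV hσ]

lemma nuclearNorm_eq_of_mul_transpose_eq {X Y : Matrix n n ℝ} (h : X * Xᵀ = Y * Yᵀ) :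
    nuclearNorm X = nuclearNorm Y := by
  rw [← nuclearNorm_transpose X, ← nuclearNorm_transpose Y, nuclearNorm, nuclearNorm,
    transpose_transpose, transpose_transpose, h]

lemma trace_mul_diagonal_le_sum {R : Matrix n n ℝ} {σ : n → ℝ} (hR : Rᵀ * R = 1) (hσ : 0 ≤ σ) :
    (R * diagonal σ).trace ≤ ∑ i, σ i := by
  have hR' : R ∈ unitaryGroup n ℝ := mem_unitaryGroup_iff'.mpr (by simpa [star_eq_conjTranspose])
  simp only [trace, diag, mul_diagonal]
  exact Finset.sum_le_sum fun i _ =>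
    mul_le_of_le_one_left (hσ i) ((le_abs_self _).trans (entry_norm_bound_of_unitary hR' i i))

lemma trace_transpose_mul_le_nuclearNorm (C : Matrix n n ℝ) {Q : Matrix n n ℝ}
    (hQ : Qᵀ * Q = 1) : (Qᵀ * C).trace ≤ nuclearNorm C := by
  obtain ⟨U, V, σ, hU, hV, hσ, rfl⟩ := exists_svd C
  have hR : (Vᵀ * Qᵀ * U)ᵀ * (Vᵀ * Qᵀ * U) = 1 := by
    simp only [transpose_mul, transpose_transpose, mul_assoc]
    simp only [← mul_assoc V, mul_eq_one_comm.mp hV, ← mul_assoc Q, mul_eq_one_comm.mp hQ,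
      one_mul, hU]
  calc (Qᵀ * (U * diagonal σ * Vᵀ)).trace = (Vᵀ * Qᵀ * U * diagonal σ).trace := by
        rw [← mul_assoc, trace_mul_comm]; simp only [mul_assoc]
    _ ≤ ∑ i, σ i := trace_mul_diagonal_le_sum hR hσ
    _ = nuclearNorm (U * diagonal σ * Vᵀ) := (nuclearNorm_mul_diagonal_mul_transpose hU hV hσ).symm

lemma exists_trace_transpose_mul_eq_nuclearNorm (C : Matrix n n ℝ) :
    ∃ Q : Matrix n n ℝ, Qᵀ * Q = 1 ∧ (Qᵀ * C).trace = nuclearNorm C := by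
  obtain ⟨U, V, σ, hU, hV, hσ, rfl⟩ := exists_svd C
  refine ⟨U * Vᵀ, ?_, ?_⟩
  · simp only [transpose_mul, transpose_transpose, mul_assoc]
    simp only [← mul_assoc Uᵀ, hU, one_mul, mul_eq_one_comm.mp hV]
  · rw [nuclearNorm_mul_diagonal_mul_transpose hU hV hσ]
    calc ((U * Vᵀ)ᵀ * (U * diagonal σ * Vᵀ)).trace = (V * diagonal σ * Vᵀ).trace := by
          simp only [transpose_mul, transpose_transpose, mul_assoc]
          simp only [← mul_assoc Uᵀ, hU, one_mul]
      _ = ∑ i, σ i := by rw [trace_mul_cycle, hV, one_mul, trace_diagonal]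

end nuclearNorm

lemma frobSq_eq_trace {m n : Type*} [Fintype m] [Fintype n] (X : Matrix m n ℝ) :
    frobSq X = (Xᵀ * X).trace := by
  simp only [frobSq, trace, diag, mul_apply, transpose_apply, sq]
  exact Finset.sum_comm

lemma frobSq_sub_mul_eq {m n : Type*} [Fintype m] [Fintype n] [DecidableEq n]
    (L M : Matrix m n ℝ) {Q : Matrix n n ℝ} (hQ : Qᵀ * Q = 1) :
    frobSq (L - M * Q) = (L * Lᵀ).trace + (M * Mᵀ).trace - 2 * (Qᵀ * (Mᵀ * L)).trace := by
  have hLL : (Lᵀ * L).trace = (L * Lᵀ).trace := trace_mul_comm _ _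
  have hMM : ((M * Q)ᵀ * (M * Q)).trace = (M * Mᵀ).trace := by
    rw [transpose_mul, Matrix.mul_assoc, trace_mul_comm, Matrix.mul_assoc, Matrix.mul_assoc,
      mul_eq_one_comm.mp hQ, Matrix.mul_one, trace_mul_comm]
  have hLM : (Lᵀ * (M * Q)).trace = (Qᵀ * (Mᵀ * L)).trace := by
    rw [← trace_transpose]; simp [Matrix.mul_assoc]
  have hML : ((M * Q)ᵀ * L).trace = (Qᵀ * (Mᵀ * L)).trace := by
    simp [Matrix.mul_assoc]
  rw [frobSq_eq_trace, transpose_sub, Matrix.sub_mul, Matrix.mul_sub, Matrix.mul_sub, trace_sub,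
    trace_sub, trace_sub, hLL, hMM, hLM, hML]
  ring

lemma distBWsq_self_mul_transpose {n : Type*} [Fintype n] [DecidableEq n] (L M : Matrix n n ℝ) :
    distBWsq (L * Lᵀ) (M * Mᵀ) = (L * Lᵀ).trace + (M * Mᵀ).trace - 2 * nuclearNorm (Mᵀ * L) := by
  set S := psdSqrt (L * Lᵀ)
  set T := psdSqrt (M * Mᵀ)
  have hS : S * S = L * Lᵀ := psdSqrt_mul_self (by simpa using posSemidef_self_mul_conjTranspose L)
  have hT : T * T = M * Mᵀ := psdSqrt_mul_self (by simpa using posSemidef_self_mul_conjTranspose M)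
  have hSt : Sᵀ = S := transpose_psdSqrt _
  have hTt : Tᵀ = T := transpose_psdSqrt _
  suffices (psdSqrt (S * (M * Mᵀ) * S)).trace = nuclearNorm (Mᵀ * L) by
    rw [distBWsq, this]
  calc (psdSqrt (S * (M * Mᵀ) * S)).trace = nuclearNorm (T * S) := by
        rw [nuclearNorm, transpose_mul, hSt, hTt, ← hT, mul_assoc, mul_assoc, mul_assoc]
    _ = nuclearNorm (T * L) := nuclearNorm_eq_of_mul_transpose_eq <| by
        rw [transpose_mul, transpose_mul, hSt, hTt, mul_assoc, ← mul_assoc S, hS]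
        simp only [mul_assoc]
    _ = nuclearNorm (Mᵀ * L) := by
        rw [nuclearNorm, nuclearNorm, transpose_mul, transpose_mul, hTt, transpose_transpose,
          mul_assoc, ← mul_assoc T, hT]
        simp only [mul_assoc]

theorem distBW_procrustes_general (n : ℕ) (A B L M : Matrix (Fin n) (Fin n) ℝ)
    (hL : A = L * Lᵀ) (hM : B = M * Mᵀ) :
    IsLeast {r : ℝ | ∃ Q : Matrix (Fin n) (Fin n) ℝ, Qᵀ * Q = 1 ∧
        r = frobNorm (L - M * Q)}
      (Real.sqrt (distBWsq A B)) := by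
  subst hL hM
  obtain ⟨Q₀, hQ₀, hQ₀_trace⟩ := exists_trace_transpose_mul_eq_nuclearNorm (Mᵀ * L)
  refine ⟨⟨Q₀, hQ₀, ?_⟩, ?_⟩
  · rw [frobNorm, frobSq_sub_mul_eq L M hQ₀, hQ₀_trace, distBWsq_self_mul_transpose]
  · rintro r ⟨Q, hQ, rfl⟩
    rw [frobNorm, frobSq_sub_mul_eq L M hQ, distBWsq_self_mul_transpose]
    gcongr
    linarith [trace_transpose_mul_le_nuclearNorm (Mᵀ * L) hQ]

/-- Procrustes representation of the Bures–Wasserstein distance: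
`dist_BW(A,B) = min { ‖L − MQ‖_F : Q orthogonal }`. -/
theorem distBW_procrustes (n : ℕ) (A B L M : Matrix (Fin n) (Fin n) ℝ)
    (hA : A.PosSemidef) (hB : B.PosSemidef)
    (hL : A = L * Lᵀ) (hM : B = M * Mᵀ) :
    IsLeast {r : ℝ | ∃ Q : Matrix (Fin n) (Fin n) ℝ, Qᵀ * Q = 1 ∧
        r = frobNorm (L - M * Q)}
      (Real.sqrt (distBWsq A B)) :=
  distBW_procrustes_general n A B L M hL hM
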